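/- arXiv:1710.10228 — 3 statements merged into one kernel-verified Lean document; each statement's English description precedes it below -/
import Mathlib

section
/- Let F be a field and suppose ρ₁ : G → GL_{n₁}(F), ρ₂ : G → GL_{n₂}(F) are group homomorphisms such that no irreducible constituent of the semisimplification of ρ₁ is isomorphic to any irreducible constituent of the semisimplification of ρ₂, ρ₁ is semisimple, and both ρ₁ and ρ₂ have scalar centralizer. If the block upper-triangular representation σ(g) = [[ρ₁(g), f(g)],[0, ρ₂(g)]] is isomorphic to ρ₁ ⊕ ρ₂, then there exists a block matrix M = [[I_{n₁}, B],[0, I_{n₂}]] in GL_{n₁+n₂}(F) such that M σ(g) M⁻¹ = [[ρ₁(g), 0],[0, ρ₂(g)]] for all g in G. -/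
/-!
Write an isomorphism `P` from `σ` to `ρ₁ ⊕ ρ₂` in blocks `[[A, B₀], [C, D]]`. The lower-left
block `C` intertwines `ρ₁` with `ρ₂`; as `ρ₁` is semisimple, a nonzero intertwiner would map some
simple submodule of `ρ₁` isomorphically into `ρ₂`, which the disjointness of constituents forbids,
so `C = 0`. Then `A` is invertible and commutes with `ρ₁`, and the upper-right block equation
says exactly that `B = A⁻¹ B₀` works.
-/

open Matrix

/-- The representation on `Fin n → F` attached to a homomorphism `G → GL_n(F)`. -/
noncomputable def matrixRep {F : Type*} [Field F] {G : Type*} [Group G] {n : ℕ}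
    (ρ : G →* GL (Fin n) F) : Representation F G (Fin n → F) :=
  (Matrix.toLinAlgEquiv'.toRingEquiv.toRingHom.toMonoidHom).comp
    ((Units.coeHom (Matrix (Fin n) (Fin n) F)).comp ρ)

/-- The underlying space `Fin n → F` of `ρ : G → GL_n(F)`, viewed as a module over the
group algebra `F[G]`. -/
def RepMod {F : Type*} [Field F] {G : Type*} [Group G] {n : ℕ}
    (_ρ : G →* GL (Fin n) F) : Type _ := Fin n → F

instance {F : Type*} [Field F] {G : Type*} [Group G] {n : ℕ} (ρ : G →* GL (Fin n) F) :
    AddCommGroup (RepMod ρ) := inferInstanceAs (AddCommGroup (Fin n → F))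

noncomputable instance {F : Type*} [Field F] {G : Type*} [Group G] {n : ℕ}
    (ρ : G →* GL (Fin n) F) : Module (MonoidAlgebra F G) (RepMod ρ) :=
  Module.compHom (Fin n → F) (Representation.asAlgebraHom (matrixRep ρ)).toRingHom

section SemisimpleHom

variable {R M N : Type*} [Ring R] [AddCommGroup M] [Module R M] [AddCommGroup N] [Module R N]

theorem Submodule.isEmpty_linearEquiv_of_forall_subquotient
    (h : ∀ (p q : Submodule R M) (p' q' : Submodule R N),
      IsSimpleModule R (↥q ⧸ Submodule.comap q.subtype p) →
      IsSimpleModule R (↥q' ⧸ Submodule.comap q'.subtype p') →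
      IsEmpty ((↥q ⧸ Submodule.comap q.subtype p) ≃ₗ[R] (↥q' ⧸ Submodule.comap q'.subtype p')))
    (S : Submodule R M) (T : Submodule R N) [IsSimpleModule R S] : IsEmpty (S ≃ₗ[R] T) := by
  refine ⟨fun e => ?_⟩
  have eS : (↥S ⧸ Submodule.comap S.subtype ⊥) ≃ₗ[R] S := Submodule.quotEquivOfEqBot _ (by simp)
  have eT : (↥T ⧸ Submodule.comap T.subtype ⊥) ≃ₗ[R] T := Submodule.quotEquivOfEqBot _ (by simp)
  have : IsSimpleModule R T := IsSimpleModule.congr e.symm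
  exact (h ⊥ S ⊥ T (IsSimpleModule.congr eS) (IsSimpleModule.congr eT)).false
    ((eS.trans e).trans eT.symm)

theorem LinearMap.eq_zero_of_isSemisimpleModule_of_isEmpty_linearEquiv [IsSemisimpleModule R M]
    (h : ∀ (S : Submodule R M) (T : Submodule R N), IsSimpleModule R S → IsEmpty (S ≃ₗ[R] T))
    (φ : M →ₗ[R] N) : φ = 0 := by
  rw [← LinearMap.ker_eq_top, eq_top_iff, ← IsSemisimpleModule.sSup_simples_eq_top, sSup_le_iff]
  rintro S (hS : IsSimpleModule R S) x hx
  obtain hinj | hzero := (φ.comp S.subtype).injective_or_eq_zero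
  · exact (h S _ hS).elim (LinearEquiv.ofInjective _ hinj)
  · exact LinearMap.congr_fun hzero ⟨x, hx⟩

end SemisimpleHom

theorem Representation.asAlgebraHom_comp_of_forall_comp {k G V W : Type*} [CommSemiring k]
    [Monoid G] [AddCommMonoid V] [Module k V] [AddCommMonoid W] [Module k W]
    {ρ : Representation k G V} {σ : Representation k G W} {T : V →ₗ[k] W}
    (hT : ∀ g, T ∘ₗ ρ g = σ g ∘ₗ T) (a : MonoidAlgebra k G) :
    T ∘ₗ ρ.asAlgebraHom a = σ.asAlgebraHom a ∘ₗ T := by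
  induction a using MonoidAlgebra.induction_linear with
  | zero => simp
  | add a b ha hb => simp only [map_add, LinearMap.comp_add, LinearMap.add_comp, ha, hb]
  | single g r =>
    rw [Representation.asAlgebraHom_single, Representation.asAlgebraHom_single,
      LinearMap.comp_smul, LinearMap.smul_comp, hT g]

theorem matrixRep_apply {F : Type*} [Field F] {G : Type*} [Group G] {n : ℕ}
    (ρ : G →* GL (Fin n) F) (g : G) :
    matrixRep ρ g = toLin' (ρ g : Matrix (Fin n) (Fin n) F) := rfl

namespace RepMod

variable {F : Type*} [Field F] {G : Type*} [Group G] {n₁ n₂ : ℕ}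
  {ρ₁ : G →* GL (Fin n₁) F} {ρ₂ : G →* GL (Fin n₂) F}

noncomputable def intertwiningMap (C : Matrix (Fin n₂) (Fin n₁) F)
    (hC : ∀ g, C * (ρ₁ g : Matrix (Fin n₁) (Fin n₁) F) = (ρ₂ g : Matrix (Fin n₂) (Fin n₂) F) * C) :
    RepMod ρ₁ →ₗ[MonoidAlgebra F G] RepMod ρ₂ where
  toFun := toLin' C
  map_add' := (toLin' C).map_add
  map_smul' a x := LinearMap.congr_fun (Representation.asAlgebraHom_comp_of_forall_comp
    (ρ := matrixRep ρ₁) (σ := matrixRep ρ₂) (fun g => by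
      rw [matrixRep_apply, matrixRep_apply, ← toLin'_mul, hC, toLin'_mul]) a) x

theorem eq_zero_of_intertwines (hss : IsSemisimpleModule (MonoidAlgebra F G) (RepMod ρ₁))
    (hdisj : ∀ (p q : Submodule (MonoidAlgebra F G) (RepMod ρ₁))
      (p' q' : Submodule (MonoidAlgebra F G) (RepMod ρ₂)),
      IsSimpleModule (MonoidAlgebra F G) (↥q ⧸ Submodule.comap q.subtype p) →
      IsSimpleModule (MonoidAlgebra F G) (↥q' ⧸ Submodule.comap q'.subtype p') →
      IsEmpty ((↥q ⧸ Submodule.comap q.subtype p) ≃ₗ[MonoidAlgebra F G]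
        (↥q' ⧸ Submodule.comap q'.subtype p')))
    (C : Matrix (Fin n₂) (Fin n₁) F)
    (hC : ∀ g, C * (ρ₁ g : Matrix (Fin n₁) (Fin n₁) F) = (ρ₂ g : Matrix (Fin n₂) (Fin n₂) F) * C) :
    C = 0 := by
  have hφ := LinearMap.eq_zero_of_isSemisimpleModule_of_isEmpty_linearEquiv
    (fun S T _ => Submodule.isEmpty_linearEquiv_of_forall_subquotient hdisj S T)
    (intertwiningMap C hC)
  exact ext_iff_mulVec.2 fun v => (LinearMap.congr_fun hφ v).trans (zero_mulVec v).symm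

end RepMod

namespace Matrix

variable {m n α : Type*} [Fintype m] [Fintype n] [Ring α]

theorem fromBlocks_mul_fromBlocks_zero₂₁_eq_iff (A : Matrix m m α) (B : Matrix m n α)
    (C : Matrix n m α) (D : Matrix n n α) (a : Matrix m m α) (x : Matrix m n α)
    (d : Matrix n n α) :
    fromBlocks A B C D * fromBlocks a x 0 d = fromBlocks a 0 0 d * fromBlocks A B C D ↔
      A * a = a * A ∧ A * x + B * d = a * B ∧ C * a = d * C ∧ C * x + D * d = d * D := by
  simp [fromBlocks_multiply, fromBlocks_inj]

theorem add_inv_mul_mul_eq_mul_inv_mul [DecidableEq m] (u : (Matrix m m α)ˣ)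
    {a : Matrix m m α} {x B : Matrix m n α} {d : Matrix n n α}
    (hua : Commute (u : Matrix m m α) a) (h : (u : Matrix m m α) * x + B * d = a * B) :
    x + ((↑u⁻¹ : Matrix m m α) * B) * d = a * ((↑u⁻¹ : Matrix m m α) * B) :=
  calc x + ((↑u⁻¹ : Matrix m m α) * B) * d
        = (↑u⁻¹ : Matrix m m α) * ((u : Matrix m m α) * x + B * d) := by
        rw [Matrix.mul_add, ← Matrix.mul_assoc, u.inv_mul, Matrix.one_mul, Matrix.mul_assoc]
    _ = a * ((↑u⁻¹ : Matrix m m α) * B) := by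
        rw [h, ← Matrix.mul_assoc, (Commute.units_inv_left hua).eq, Matrix.mul_assoc]

end Matrix

theorem split_by_unipotent_of_isomorphic_to_sum_general
    {F : Type*} [Field F] {G : Type*} [Group G] {n₁ n₂ : ℕ}
    (ρ₁ : G →* GL (Fin n₁) F) (ρ₂ : G →* GL (Fin n₂) F)
    (f : G → Matrix (Fin n₁) (Fin n₂) F)
    (σ : G →* Matrix (Fin n₁ ⊕ Fin n₂) (Fin n₁ ⊕ Fin n₂) F)
    (hσ : ∀ g, σ g = Matrix.fromBlocks (ρ₁ g : Matrix (Fin n₁) (Fin n₁) F) (f g) 0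
      (ρ₂ g : Matrix (Fin n₂) (Fin n₂) F))
    -- `ρ₁` is semisimple:
    (hss : IsSemisimpleModule (MonoidAlgebra F G) (RepMod ρ₁))
    -- no irreducible constituent of `ρ₁^ss` is isomorphic to one of `ρ₂^ss`:
    (hdisj : ∀ (p q : Submodule (MonoidAlgebra F G) (RepMod ρ₁))
      (p' q' : Submodule (MonoidAlgebra F G) (RepMod ρ₂)),
      IsSimpleModule (MonoidAlgebra F G) (↥q ⧸ Submodule.comap q.subtype p) →
      IsSimpleModule (MonoidAlgebra F G) (↥q' ⧸ Submodule.comap q'.subtype p') →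
      IsEmpty ((↥q ⧸ Submodule.comap q.subtype p) ≃ₗ[MonoidAlgebra F G]
        (↥q' ⧸ Submodule.comap q'.subtype p')))
    -- `σ` is isomorphic to `ρ₁ ⊕ ρ₂`:
    (hiso : ∃ P : Matrix (Fin n₁ ⊕ Fin n₂) (Fin n₁ ⊕ Fin n₂) F, IsUnit P ∧
      ∀ g, P * σ g = Matrix.fromBlocks (ρ₁ g : Matrix (Fin n₁) (Fin n₁) F) 0 0
        (ρ₂ g : Matrix (Fin n₂) (Fin n₂) F) * P) :
    ∃ B : Matrix (Fin n₁) (Fin n₂) F,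
      ∀ g, Matrix.fromBlocks 1 B 0 1 * σ g =
        Matrix.fromBlocks (ρ₁ g : Matrix (Fin n₁) (Fin n₁) F) 0 0
          (ρ₂ g : Matrix (Fin n₂) (Fin n₂) F) * Matrix.fromBlocks 1 B 0 1 := by
  obtain ⟨P, hP, hPσ⟩ := hiso
  rw [← fromBlocks_toBlocks P] at hP hPσ
  have hblocks := fun g => (fromBlocks_mul_fromBlocks_zero₂₁_eq_iff _ _ _ _ _ _ _).1 (hσ g ▸ hPσ g)
  have hC : P.toBlocks₂₁ = 0 :=
    RepMod.eq_zero_of_intertwines hss hdisj _ fun g => (hblocks g).2.2.1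
  rw [hC, isUnit_fromBlocks_zero₂₁] at hP
  obtain ⟨u, hu⟩ := hP.1
  refine ⟨(↑u⁻¹ : Matrix (Fin n₁) (Fin n₁) F) * P.toBlocks₁₂, fun g => ?_⟩
  rw [hσ g, fromBlocks_mul_fromBlocks_zero₂₁_eq_iff]
  refine ⟨by simp, ?_, by simp, by simp⟩
  rw [Matrix.one_mul]
  exact add_inv_mul_mul_eq_mul_inv_mul u (hu ▸ (hblocks g).1) (hu ▸ (hblocks g).2.1)

/-- Let `ρ₁, ρ₂` be matrix representations of a group `G` over a field
`F` such that `ρ₁` is semisimple, no irreducible constituent of (the semisimplification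
of) `ρ₁` is isomorphic to an irreducible constituent of the semisimplification of `ρ₂`,
and both `ρ₁, ρ₂` have scalar centralizer.  If the block upper-triangular representation
`σ(g) = [[ρ₁(g), f(g)],[0, ρ₂(g)]]` is isomorphic to `ρ₁ ⊕ ρ₂`, then there is a matrix
`M = [[I, B],[0, I]]` conjugating `σ` to the block-diagonal `ρ₁ ⊕ ρ₂`. -/
theorem split_by_unipotent_of_isomorphic_to_sum
    {F : Type*} [Field F] {G : Type*} [Group G] {n₁ n₂ : ℕ}
    (ρ₁ : G →* GL (Fin n₁) F) (ρ₂ : G →* GL (Fin n₂) F)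
    (f : G → Matrix (Fin n₁) (Fin n₂) F)
    (σ : G →* Matrix (Fin n₁ ⊕ Fin n₂) (Fin n₁ ⊕ Fin n₂) F)
    (hσ : ∀ g, σ g = Matrix.fromBlocks (ρ₁ g : Matrix (Fin n₁) (Fin n₁) F) (f g) 0
      (ρ₂ g : Matrix (Fin n₂) (Fin n₂) F))
    -- `ρ₁` is semisimple:
    (hss : IsSemisimpleModule (MonoidAlgebra F G) (RepMod ρ₁))
    -- no irreducible constituent of `ρ₁^ss` is isomorphic to one of `ρ₂^ss`:
    (hdisj : ∀ (p q : Submodule (MonoidAlgebra F G) (RepMod ρ₁))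
      (p' q' : Submodule (MonoidAlgebra F G) (RepMod ρ₂)),
      IsSimpleModule (MonoidAlgebra F G) (↥q ⧸ Submodule.comap q.subtype p) →
      IsSimpleModule (MonoidAlgebra F G) (↥q' ⧸ Submodule.comap q'.subtype p') →
      IsEmpty ((↥q ⧸ Submodule.comap q.subtype p) ≃ₗ[MonoidAlgebra F G]
        (↥q' ⧸ Submodule.comap q'.subtype p')))
    -- `ρ₁` and `ρ₂` have scalar centralizer:
    (hc₁ : ∀ C : Matrix (Fin n₁) (Fin n₁) F,
      (∀ g, C * (ρ₁ g : Matrix (Fin n₁) (Fin n₁) F) =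
        (ρ₁ g : Matrix (Fin n₁) (Fin n₁) F) * C) → ∃ s : F, C = s • 1)
    (hc₂ : ∀ C : Matrix (Fin n₂) (Fin n₂) F,
      (∀ g, C * (ρ₂ g : Matrix (Fin n₂) (Fin n₂) F) =
        (ρ₂ g : Matrix (Fin n₂) (Fin n₂) F) * C) → ∃ s : F, C = s • 1)
    -- `σ` is isomorphic to `ρ₁ ⊕ ρ₂`:
    (hiso : ∃ P : Matrix (Fin n₁ ⊕ Fin n₂) (Fin n₁ ⊕ Fin n₂) F, IsUnit P ∧
      ∀ g, P * σ g = Matrix.fromBlocks (ρ₁ g : Matrix (Fin n₁) (Fin n₁) F) 0 0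
        (ρ₂ g : Matrix (Fin n₂) (Fin n₂) F) * P) :
    ∃ B : Matrix (Fin n₁) (Fin n₂) F,
      ∀ g, Matrix.fromBlocks 1 B 0 1 * σ g =
        Matrix.fromBlocks (ρ₁ g : Matrix (Fin n₁) (Fin n₁) F) 0 0
          (ρ₂ g : Matrix (Fin n₂) (Fin n₂) F) * Matrix.fromBlocks 1 B 0 1 :=
  split_by_unipotent_of_isomorphic_to_sum_general ρ₁ ρ₂ f σ hσ hss hdisj hiso
end

section
/- Let O be a complete discrete valuation ring with residue field F, E its fraction field, and let V be a 2-dimensional E-vector space with a continuous action of a group G via ρ : G → GL₂(O) (with respect to a chosen basis e₁, e₂). Let T = O e₁ ⊕ O e₂ and W = V/T. Suppose the image of the inertia-like subgroup I ≤ G under ρ is topologically generated by ρ(g) where, for some A = [[a,b],[c,d]] ∈ SL₂(E), A ρ(g) A⁻¹ = [[1,1],[0,1]], and at least one of c, d is a unit in O. Then W^I = { [x,y]ᵗ + T : x, y ∈ E, cx + dy ∈ O }, and W^I is isomorphic as an O-module to E/O; in particular W^I is a divisible O-module. -/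
open Matrix

section

variable (O : Type*) [CommRing O] [IsDomain O] [IsDiscreteValuationRing O]
  (E : Type*) [Field E] [Algebra O E] [IsFractionRing O E]

/-- The standard lattice `T = O e₁ ⊕ O e₂` inside `V = E²`. -/
noncomputable def latticeT : Submodule O (Fin 2 → E) :=
  Submodule.pi Set.univ fun _ => LinearMap.range (Algebra.linearMap O E)

/-- The `O`-linear action of a matrix `M ∈ M₂(O)` on `V = E²`. -/
noncomputable def matAction (M : Matrix (Fin 2) (Fin 2) O) :
    (Fin 2 → E) →ₗ[O] (Fin 2 → E) :=
  ((M.map (algebraMap O E)).mulVecLin).restrictScalars O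

set_option linter.unusedSectionVars false in
lemma latticeT_stable (M : Matrix (Fin 2) (Fin 2) O) :
    latticeT O E ≤ (latticeT O E).comap (matAction O E M) := by
  intro v hv
  intro i _
  simp only [matAction, LinearMap.coe_restrictScalars, Matrix.mulVecLin_apply,
    Matrix.mulVec, dotProduct, Matrix.map_apply]
  apply Submodule.sum_mem
  intro j _
  obtain ⟨x, hx⟩ := hv j (Set.mem_univ j)
  exact ⟨M i j * x, by simp [← hx, Algebra.linearMap_apply, _root_.map_mul]⟩

/-- The induced `O`-linear action of `M ∈ M₂(O)` on `W = V/T = (E/O)²`. -/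
noncomputable def quotAction (M : Matrix (Fin 2) (Fin 2) O) :
    ((Fin 2 → E) ⧸ latticeT O E) →ₗ[O] ((Fin 2 → E) ⧸ latticeT O E) :=
  Submodule.mapQ _ _ (matAction O E M) (latticeT_stable O E M)

/-- The fixed points `W^I` of the (topologically cyclic) inertia action generated by
the action of `M` on `W`. -/
noncomputable def quotFixed (M : Matrix (Fin 2) (Fin 2) O) :
    Submodule O ((Fin 2 → E) ⧸ latticeT O E) :=
  LinearMap.ker (quotAction O E M - LinearMap.id)

end

/-!
Conjugating by `A` turns `M - 1` into `!![0, 1; 0, 0]`, so `(M - 1) v = (c x + d y) • (d, -c)`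
for `v = (x, y)`. As `(c, d)` is unimodular over `O`, the vector `s • (d, -c)` lies in `T` iff
`s ∈ O`; this describes `W^I`. The same unimodularity shows that `t ↦ t • (d, -c) + T` maps `E`
onto `W^I` with kernel `O`, so `W^I ≅ E/O`, which is divisible.
-/

lemma isCoprime_of_isUnit_or_isUnit {R : Type*} [CommSemiring R] {x y : R}
    (h : IsUnit x ∨ IsUnit y) : IsCoprime x y := by
  rcases h with ⟨u, rfl⟩ | ⟨u, rfl⟩
  · exact ⟨↑u⁻¹, 0, by simp⟩
  · exact ⟨0, ↑u⁻¹, by simp⟩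

section Integers

variable {O E : Type*} [CommRing O] [CommRing E] [Algebra O E]

lemma algebraMap_mul_mem_range (a : O) {s : E}
    (hs : s ∈ LinearMap.range (Algebra.linearMap O E)) :
    algebraMap O E a * s ∈ LinearMap.range (Algebra.linearMap O E) := by
  simpa only [Algebra.smul_def] using Submodule.smul_mem _ a hs

lemma mem_range_iff_of_isCoprime {c d : O} (hcd : IsCoprime c d) (s : E) :
    algebraMap O E c * s ∈ LinearMap.range (Algebra.linearMap O E) ∧
      algebraMap O E d * s ∈ LinearMap.range (Algebra.linearMap O E) ↔
      s ∈ LinearMap.range (Algebra.linearMap O E) := by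
  refine ⟨fun ⟨hc, hd⟩ => ?_,
    fun hs => ⟨algebraMap_mul_mem_range c hs, algebraMap_mul_mem_range d hs⟩⟩
  obtain ⟨p, q, hpq⟩ := hcd
  have hs : s = algebraMap O E p * (algebraMap O E c * s) +
      algebraMap O E q * (algebraMap O E d * s) := by
    rw [← mul_assoc, ← mul_assoc, ← add_mul, ← map_mul, ← map_mul, ← map_add, hpq, map_one,
      one_mul]
  rw [hs]
  exact add_mem (algebraMap_mul_mem_range p hc) (algebraMap_mul_mem_range q hd)

end Integers

lemma exists_smul_eq_of_isFractionRing {O E : Type*} [CommRing O] [Field E] [Algebra O E]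
    [IsFractionRing O E] {r : O} (hr : r ≠ 0) (y : E ⧸ LinearMap.range (Algebra.linearMap O E)) :
    ∃ z, r • z = y := by
  obtain ⟨e, rfl⟩ := Submodule.Quotient.mk_surjective _ y
  have hr' : algebraMap O E r ≠ 0 := (map_ne_zero_iff _ (IsFractionRing.injective O E)).mpr hr
  exact ⟨Submodule.Quotient.mk (e / algebraMap O E r), by
    rw [← Submodule.Quotient.mk_smul, Algebra.smul_def, mul_div_cancel₀ _ hr']⟩

lemma Submodule.exists_smul_eq_of_linearEquiv {R M N : Type*} [Semiring R] [AddCommMonoid M]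
    [AddCommMonoid N] [Module R M] [Module R N] {Q : Submodule R M} (e : Q ≃ₗ[R] N) {r : R}
    (h : ∀ y : N, ∃ z, r • z = y) : ∀ w ∈ Q, ∃ w' ∈ Q, r • w' = w := by
  intro w hw
  obtain ⟨z, hz⟩ := h (e ⟨w, hw⟩)
  refine ⟨e.symm z, (e.symm z).2, ?_⟩
  rw [← Submodule.coe_smul, ← map_smul, hz, LinearEquiv.symm_apply_apply]

lemma Matrix.mulVec_sub_self_of_conj_eq_unipotent {K : Type*} [CommRing K]
    {A N : Matrix (Fin 2) (Fin 2) K} (hA : A.det = 1) (hconj : A * N * A⁻¹ = !![1, 1; 0, 1])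
    (v : Fin 2 → K) :
    N *ᵥ v - v = (A 1 0 * v 0 + A 1 1 * v 1) • ![A 1 1, -A 1 0] := by
  have hu : IsUnit A.det := hA ▸ isUnit_one
  have hAinv : A⁻¹ = !![A 1 1, -A 0 1; -A 1 0, A 0 0] := by
    rw [Matrix.inv_def, hA, Matrix.adjugate_fin_two]
    simp
  calc N *ᵥ v - v = A⁻¹ *ᵥ (!![1, 1; 0, 1] *ᵥ (A *ᵥ v) - A *ᵥ v) := by
        rw [← hconj, Matrix.mulVec_sub, Matrix.mulVec_mulVec, Matrix.mulVec_mulVec,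
          Matrix.mulVec_mulVec, Matrix.mul_assoc, Matrix.mul_assoc, Matrix.nonsing_inv_mul _ hu,
          Matrix.mul_one, ← Matrix.mul_assoc, Matrix.nonsing_inv_mul _ hu, Matrix.one_mul,
          Matrix.one_mulVec]
    _ = _ := by
        rw [hAinv]
        ext i
        fin_cases i <;> simp [Matrix.mulVec, dotProduct, Fin.sum_univ_two] <;> ring

section Lattice

variable {O : Type*} [CommRing O] {E : Type*} [Field E] [Algebra O E]

lemma mem_latticeT_iff (w : Fin 2 → E) :
    w ∈ latticeT O E ↔
      w 0 ∈ LinearMap.range (Algebra.linearMap O E) ∧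
        w 1 ∈ LinearMap.range (Algebra.linearMap O E) := by
  simp [latticeT, Submodule.mem_pi, Fin.forall_fin_two]

variable (E) in
noncomputable def perpLineMap (c d : O) : E →ₗ[O] (Fin 2 → E) ⧸ latticeT O E :=
  (latticeT O E).mkQ ∘ₗ (LinearMap.toSpanSingleton E (Fin 2 → E)
    ![algebraMap O E d, -algebraMap O E c]).restrictScalars O

lemma ker_perpLineMap {c d : O} (hcd : IsCoprime c d) :
    LinearMap.ker (perpLineMap E c d) = LinearMap.range (Algebra.linearMap O E) := by
  ext t
  rw [← mem_range_iff_of_isCoprime hcd t]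
  simp only [perpLineMap, LinearMap.mem_ker, LinearMap.coe_comp, Function.comp_apply,
    LinearMap.coe_restrictScalars, LinearMap.toSpanSingleton_apply, Submodule.mkQ_apply,
    Submodule.Quotient.mk_eq_zero, mem_latticeT_iff, Pi.smul_apply, smul_eq_mul,
    Matrix.cons_val_zero, Matrix.cons_val_one, mul_neg, neg_mem_iff]
  rw [and_comm, mul_comm t, mul_comm t]

lemma mk_mem_range_perpLineMap_iff {c d : O} (hcd : IsCoprime c d) (v : Fin 2 → E) :
    Submodule.Quotient.mk v ∈ LinearMap.range (perpLineMap E c d) ↔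
      algebraMap O E c * v 0 + algebraMap O E d * v 1 ∈
        LinearMap.range (Algebra.linearMap O E) := by
  set c' := algebraMap O E c
  set d' := algebraMap O E d
  have hmk (t : E) : perpLineMap E c d t = Submodule.Quotient.mk (t • ![d', -c']) := rfl
  constructor
  · rintro ⟨t, ht⟩
    rw [hmk, Submodule.Quotient.eq, mem_latticeT_iff] at ht
    have hsum : c' * v 0 + d' * v 1 =
        -(c' * (t • ![d', -c'] - v) 0 + d' * (t • ![d', -c'] - v) 1) := by
      simp only [Pi.sub_apply, Pi.smul_apply, smul_eq_mul, Matrix.cons_val_zero,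
        Matrix.cons_val_one]
      ring
    rw [hsum]
    exact neg_mem (add_mem (algebraMap_mul_mem_range c ht.1) (algebraMap_mul_mem_range d ht.2))
  · intro hs
    obtain ⟨p, q, hpq⟩ := hcd
    set p' := algebraMap O E p
    set q' := algebraMap O E q
    have hpq' : p' * c' + q' * d' = 1 := by simpa using congrArg (algebraMap O E) hpq
    refine ⟨q' * v 0 - p' * v 1, ?_⟩
    rw [hmk, Submodule.Quotient.eq, mem_latticeT_iff]
    simp only [Pi.sub_apply, Pi.smul_apply, smul_eq_mul, Matrix.cons_val_zero,
      Matrix.cons_val_one]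
    constructor
    · have h0 : (q' * v 0 - p' * v 1) * d' - v 0 = -(p' * (c' * v 0 + d' * v 1)) := by
        linear_combination v 0 * hpq'
      exact h0 ▸ neg_mem (algebraMap_mul_mem_range p hs)
    · have h1 : (q' * v 0 - p' * v 1) * -c' - v 1 = -(q' * (c' * v 0 + d' * v 1)) := by
        linear_combination v 1 * hpq'
      exact h1 ▸ neg_mem (algebraMap_mul_mem_range q hs)

lemma nonempty_linearEquiv_of_forall_mk_mem_iff {c d : O} (hcd : IsCoprime c d)
    (Q : Submodule O ((Fin 2 → E) ⧸ latticeT O E))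
    (hQ : ∀ v : Fin 2 → E, Submodule.Quotient.mk v ∈ Q ↔
      algebraMap O E c * v 0 + algebraMap O E d * v 1 ∈ LinearMap.range (Algebra.linearMap O E)) :
    Nonempty (Q ≃ₗ[O] (E ⧸ LinearMap.range (Algebra.linearMap O E))) := by
  have hrange : LinearMap.range (perpLineMap E c d) = Q := by
    ext w
    obtain ⟨v, rfl⟩ := Submodule.Quotient.mk_surjective _ w
    rw [mk_mem_range_perpLineMap_iff hcd, hQ]
  exact ⟨((Submodule.quotEquivOfEq _ _ (ker_perpLineMap hcd).symm).trans
    ((perpLineMap E c d).quotKerEquivRange.trans (LinearEquiv.ofEq _ _ hrange))).symm⟩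

end Lattice

section Fixed

variable {O : Type*} [CommRing O] [IsDomain O] [IsDiscreteValuationRing O]
  {E : Type*} [Field E] [Algebra O E] [IsFractionRing O E]

lemma mk_mem_quotFixed_iff (M : Matrix (Fin 2) (Fin 2) O) (v : Fin 2 → E) :
    Submodule.Quotient.mk v ∈ quotFixed O E M ↔ matAction O E M v - v ∈ latticeT O E := by
  rw [quotFixed, LinearMap.mem_ker, LinearMap.sub_apply, LinearMap.id_apply, quotAction,
    Submodule.mapQ_apply, ← Submodule.Quotient.mk_sub, Submodule.Quotient.mk_eq_zero]

lemma mk_mem_quotFixed_iff_of_conj {M : Matrix (Fin 2) (Fin 2) O}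
    {A : Matrix (Fin 2) (Fin 2) E}
    (hA : A.det = 1) (hconj : A * M.map (algebraMap O E) * A⁻¹ = !![1, 1; 0, 1])
    {c d : O} (hc : algebraMap O E c = A 1 0) (hd : algebraMap O E d = A 1 1)
    (hcd : IsCoprime c d) (v : Fin 2 → E) :
    Submodule.Quotient.mk v ∈ quotFixed O E M ↔
      A 1 0 * v 0 + A 1 1 * v 1 ∈ LinearMap.range (Algebra.linearMap O E) := by
  rw [mk_mem_quotFixed_iff, matAction, LinearMap.coe_restrictScalars, Matrix.mulVecLin_apply,
    Matrix.mulVec_sub_self_of_conj_eq_unipotent hA hconj, mem_latticeT_iff,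
    ← mem_range_iff_of_isCoprime hcd (A 1 0 * v 0 + A 1 1 * v 1), hc, hd]
  simp only [Pi.smul_apply, smul_eq_mul, Matrix.cons_val_zero, Matrix.cons_val_one,
    mul_neg, neg_mem_iff]
  rw [and_comm, mul_comm _ (A 1 0), mul_comm _ (A 1 1)]

end Fixed

theorem quotFixed_description_and_divisible_general
    (O : Type*) [CommRing O] [IsDomain O] [IsDiscreteValuationRing O]
    (E : Type*) [Field E] [Algebra O E] [IsFractionRing O E]
    (M : Matrix (Fin 2) (Fin 2) O)
    (A : Matrix (Fin 2) (Fin 2) E) (hA : A.det = 1)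
    (hconj : A * M.map (algebraMap O E) * A⁻¹ = !![1, 1; 0, 1])
    (c₀ d₀ : O) (hc₀ : algebraMap O E c₀ = A 1 0) (hd₀ : algebraMap O E d₀ = A 1 1)
    (hunit : IsUnit c₀ ∨ IsUnit d₀) :
    (∀ v : Fin 2 → E,
      Submodule.Quotient.mk v ∈ quotFixed O E M ↔
        A 1 0 * v 0 + A 1 1 * v 1 ∈ LinearMap.range (Algebra.linearMap O E)) ∧
    Nonempty (↥(quotFixed O E M) ≃ₗ[O] (E ⧸ LinearMap.range (Algebra.linearMap O E))) ∧
    (∀ r : O, r ≠ 0 → ∀ w ∈ quotFixed O E M, ∃ w' ∈ quotFixed O E M, r • w' = w) := by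
  have hcd : IsCoprime c₀ d₀ := isCoprime_of_isUnit_or_isUnit hunit
  have hfixed := mk_mem_quotFixed_iff_of_conj hA hconj hc₀ hd₀ hcd
  obtain ⟨e⟩ := nonempty_linearEquiv_of_forall_mk_mem_iff hcd (quotFixed O E M)
    (by simpa only [hc₀, hd₀] using hfixed)
  exact ⟨hfixed, ⟨e⟩, fun r hr =>
    Submodule.exists_smul_eq_of_linearEquiv e (exists_smul_eq_of_isFractionRing hr)⟩

/-- Let `O` be a complete discrete valuation ring with fraction field
`E`, `V = E²` with `G` acting through `ρ(g) = M ∈ GL₂(O)`, `T = O²` and `W = V/T`.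
Suppose `A M_E A⁻¹ = [[1,1],[0,1]]` for some `A = [[a,b],[c,d]] ∈ SL₂(E)` where
`c, d ∈ O` and at least one of them is a unit of `O`.  Then the fixed points of the
inertia action satisfy `W^I = {[x,y]ᵗ + T : cx + dy ∈ O}`, `W^I ≅ E/O` as `O`-modules,
and in particular `W^I` is divisible. -/
theorem quotFixed_description_and_divisible
    (O : Type*) [CommRing O] [IsDomain O] [IsDiscreteValuationRing O]
    [IsAdicComplete (IsLocalRing.maximalIdeal O) O]
    (E : Type*) [Field E] [Algebra O E] [IsFractionRing O E]
    (M : Matrix (Fin 2) (Fin 2) O)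
    (A : Matrix (Fin 2) (Fin 2) E) (hA : A.det = 1)
    (hconj : A * M.map (algebraMap O E) * A⁻¹ = !![1, 1; 0, 1])
    (c₀ d₀ : O) (hc₀ : algebraMap O E c₀ = A 1 0) (hd₀ : algebraMap O E d₀ = A 1 1)
    (hunit : IsUnit c₀ ∨ IsUnit d₀) :
    (∀ v : Fin 2 → E,
      Submodule.Quotient.mk v ∈ quotFixed O E M ↔
        A 1 0 * v 0 + A 1 1 * v 1 ∈ LinearMap.range (Algebra.linearMap O E)) ∧
    Nonempty (↥(quotFixed O E M) ≃ₗ[O] (E ⧸ LinearMap.range (Algebra.linearMap O E))) ∧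
    (∀ r : O, r ≠ 0 → ∀ w ∈ quotFixed O E M, ∃ w' ∈ quotFixed O E M, r • w' = w) :=
  quotFixed_description_and_divisible_general O E M A hA hconj c₀ d₀ hc₀ hd₀ hunit
end

section
/- Let A be a local ring with maximal ideal m_A and residue field F, let G be a group, and let σ : G → GL₄(A) be a representation whose reduction modulo m_A is block upper-triangular with diagonal blocks χ^{k-2}, ρ, χ^{k-1} (of sizes 1, 2, 1) where ρ is absolutely irreducible over F and the three diagonal blocks are pairwise non-isomorphic after semisimplification. Then the reduction σ̄ has scalar centralizer: any matrix C ∈ M₄(F) commuting with σ̄(g) for all g ∈ G is a scalar multiple of the identity. -/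
/-!
Cut a matrix `C` commuting with `σ̄` into blocks of sizes `1, 2, 1`. Comparing entries, the
bottom-left corner is killed by an element on which the two characters differ; the remaining
bottom row and left column are then eigenvectors of every `ρ(g)`, hence zero, since the `ρ(g)`
span `M₂(F)` and so leave no line invariant; for the same reason the middle block is a scalar
`s`. The top row of `C` now exhibits `(C₀₀ - s) • a` as a coboundary, so `C₀₀ = s` because `a`
is nonsplit, and likewise `C₃₃ = s` because `c` is; the rest of the top row and right column
are eigenvectors again, and the top-right corner falls to the characters once more.
-/

open Matrix

theorem LinearMap.apply_mem_of_span_eq_top {R M N : Type*} [Semiring R] [AddCommMonoid M]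
    [AddCommMonoid N] [Module R M] [Module R N] {S : Set M} (hS : Submodule.span R S = ⊤)
    (f : M →ₗ[R] N) {W : Submodule R N} (h : ∀ x ∈ S, f x ∈ W) (x : M) : f x ∈ W :=
  Submodule.span_le (p := W.comap f) |>.mpr h (hS ▸ Submodule.mem_top)

namespace Matrix

variable {F : Type*} [Field F]

section Spanning

variable {n ι : Type*} [Fintype n] [DecidableEq n] {R : ι → Matrix n n F}

theorem eq_zero_of_forall_mulVec_mem_span_singleton [Nontrivial n] {u : n → F}
    (h : ∀ M : Matrix n n F, M *ᵥ u ∈ F ∙ u) : u = 0 := by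
  by_contra hu
  obtain ⟨j, hj⟩ := Function.ne_iff.mp hu
  have hsingle (i : n) : ∃ s : F, s • u = Pi.single i 1 := by
    have := h (single i j 1)
    rw [single_mulVec_eq, one_mul, Submodule.smul_mem_iff _ hj] at this
    exact Submodule.mem_span_singleton.mp this
  obtain ⟨i, k, hik⟩ := exists_pair_ne n
  obtain ⟨s, hs⟩ := hsingle i
  obtain ⟨t, ht⟩ := hsingle k
  have hts : t • Pi.single i (1 : F) = s • Pi.single k 1 := by
    rw [← hs, ← ht, smul_smul, smul_smul, mul_comm]
  have ht0 : t = 0 := by simpa [hik] using congrFun hts i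
  simpa [ht0] using congrFun ht k

theorem eq_zero_of_forall_vecMul_mem_span_singleton [Nontrivial n] {y : n → F}
    (h : ∀ M : Matrix n n F, y ᵥ* M ∈ F ∙ y) : y = 0 :=
  eq_zero_of_forall_mulVec_mem_span_singleton fun M => vecMul_transpose M y ▸ h Mᵀ

theorem eq_zero_of_mulVec_eq_smul [Nontrivial n] (hR : Submodule.span F (Set.range R) = ⊤)
    {u : n → F} (t : ι → F) (h : ∀ i, R i *ᵥ u = t i • u) : u = 0 :=
  eq_zero_of_forall_mulVec_mem_span_singleton <|
    ((mulVecBilin F F).flip u).apply_mem_of_span_eq_top hR <| by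
      rintro _ ⟨i, rfl⟩
      exact Submodule.mem_span_singleton.mpr ⟨t i, (h i).symm⟩

theorem eq_zero_of_vecMul_eq_smul [Nontrivial n] (hR : Submodule.span F (Set.range R) = ⊤)
    {y : n → F} (t : ι → F) (h : ∀ i, y ᵥ* R i = t i • y) : y = 0 :=
  eq_zero_of_forall_vecMul_mem_span_singleton <|
    (vecMulBilin F F y).apply_mem_of_span_eq_top hR <| by
      rintro _ ⟨i, rfl⟩
      exact Submodule.mem_span_singleton.mpr ⟨t i, (h i).symm⟩

theorem exists_eq_smul_one_of_forall_commute (hR : Submodule.span F (Set.range R) = ⊤)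
    {X : Matrix n n F} (h : ∀ i, Commute X (R i)) : ∃ s : F, X = s • 1 := by
  have hcomm (M : Matrix n n F) : X * M = M * X := by
    have := (LinearMap.mulLeft F X - LinearMap.mulRight F X).apply_mem_of_span_eq_top hR
      (W := ⊥) (by rintro _ ⟨i, rfl⟩; simpa [sub_eq_zero] using (h i).eq) M
    simpa [sub_eq_zero] using this
  obtain ⟨s, hs⟩ := mem_range_scalar_of_commute_single fun i j _ => (hcomm (single i j 1)).symm
  exact ⟨s, by rw [← hs, scalar_apply, smul_one_eq_diagonal]⟩

end Spanning

section Coboundary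

variable {n ι : Type*} [Fintype n] {R : ι → Matrix n n F}

theorem eq_zero_of_smul_eq_vecMul_coboundary {a : ι → n → F} {α : ι → F} {q : n → F} {d : F}
    (h : ∀ i, d • a i = α i • q - q ᵥ* R i)
    (hns : ¬ ∃ f : n → F, ∀ i, a i = α i • f - f ᵥ* R i) : d = 0 := by
  by_contra hd
  refine hns ⟨d⁻¹ • q, fun i => ?_⟩
  rw [smul_vecMul, smul_comm, ← smul_sub, ← h, inv_smul_smul₀ hd]

theorem eq_zero_of_smul_eq_mulVec_coboundary {c : ι → n → F} {β : ι → F} {v : n → F} {d : F}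
    (h : ∀ i, d • c i = R i *ᵥ v - β i • v)
    (hns : ¬ ∃ f : n → F, ∀ i, c i = R i *ᵥ f - β i • f) : d = 0 := by
  by_contra hd
  refine hns ⟨d⁻¹ • v, fun i => ?_⟩
  rw [mulVec_smul, smul_comm, ← smul_sub, ← h, inv_smul_smul₀ hd]

end Coboundary

def blockTriangular₁₂₁ (α : F) (a : Fin 2 → F) (b : F) (R : Matrix (Fin 2) (Fin 2) F)
    (c : Fin 2 → F) (β : F) : Matrix (Fin 4) (Fin 4) F :=
  !![α, a 0, a 1, b;
     0, R 0 0, R 0 1, c 0;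
     0, R 1 0, R 1 1, c 1;
     0, 0, 0, β]

namespace blockTriangular₁₂₁

variable {α β b : F} {a c : Fin 2 → F} {R : Matrix (Fin 2) (Fin 2) F}
  {C : Matrix (Fin 4) (Fin 4) F}

theorem bottomLeft_eq_zero_of_commute (hC : Commute C (blockTriangular₁₂₁ α a b R c β))
    (hαβ : α ≠ β) : C 3 0 = 0 := by
  have h := congrFun₂ hC.eq 3 0
  simp only [blockTriangular₁₂₁, mul_apply, Fin.sum_univ_four, of_apply, cons_val', cons_val,
    cons_val_fin_one] at h
  have : (α - β) * C 3 0 = 0 := by linear_combination h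
  exact (mul_eq_zero.mp this).resolve_left (sub_ne_zero.mpr hαβ)

theorem bottomRow_vecMul_of_commute (hC : Commute C (blockTriangular₁₂₁ α a b R c β))
    (h30 : C 3 0 = 0) : ![C 3 1, C 3 2] ᵥ* R = β • ![C 3 1, C 3 2] := by
  have h1 := congrFun₂ hC.eq 3 1
  have h2 := congrFun₂ hC.eq 3 2
  simp only [blockTriangular₁₂₁, mul_apply, Fin.sum_univ_four, of_apply, cons_val', cons_val,
    cons_val_fin_one] at h1 h2
  ext j; fin_cases j <;> simp only [vecMul, dotProduct, Fin.sum_univ_two, Pi.smul_apply,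
    smul_eq_mul, Fin.zero_eta, Fin.mk_one, cons_val]
  · linear_combination h1 - a 0 * h30
  · linear_combination h2 - a 1 * h30

theorem mulVec_leftCol_of_commute (hC : Commute C (blockTriangular₁₂₁ α a b R c β))
    (h30 : C 3 0 = 0) : R *ᵥ ![C 1 0, C 2 0] = α • ![C 1 0, C 2 0] := by
  have h1 := congrFun₂ hC.eq 1 0
  have h2 := congrFun₂ hC.eq 2 0
  simp only [blockTriangular₁₂₁, mul_apply, Fin.sum_univ_four, of_apply, cons_val', cons_val,
    cons_val_fin_one] at h1 h2
  ext j; fin_cases j <;> simp only [mulVec, dotProduct, Fin.sum_univ_two, Pi.smul_apply,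
    smul_eq_mul, Fin.zero_eta, Fin.mk_one, cons_val]
  · linear_combination -h1 - c 0 * h30
  · linear_combination -h2 - c 1 * h30

theorem middleBlock_commute_of_commute (hC : Commute C (blockTriangular₁₂₁ α a b R c β))
    (hr : ![C 3 1, C 3 2] = 0) (hp : ![C 1 0, C 2 0] = 0) :
    Commute !![C 1 1, C 1 2; C 2 1, C 2 2] R := by
  obtain ⟨h31, h32⟩ : C 3 1 = 0 ∧ C 3 2 = 0 := by simpa using hr
  obtain ⟨h10, h20⟩ : C 1 0 = 0 ∧ C 2 0 = 0 := by simpa using hp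
  have h11 := congrFun₂ hC.eq 1 1
  have h12 := congrFun₂ hC.eq 1 2
  have h21 := congrFun₂ hC.eq 2 1
  have h22 := congrFun₂ hC.eq 2 2
  simp only [blockTriangular₁₂₁, mul_apply, Fin.sum_univ_four, of_apply, cons_val', cons_val,
    cons_val_fin_one] at h11 h12 h21 h22
  ext i j; fin_cases i <;> fin_cases j <;> simp only [mul_apply, Fin.sum_univ_two, of_apply,
    Fin.zero_eta, Fin.mk_one, cons_val]
  · linear_combination h11 - a 0 * h10 + c 0 * h31
  · linear_combination h12 - a 1 * h10 + c 0 * h32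
  · linear_combination h21 - a 0 * h20 + c 1 * h31
  · linear_combination h22 - a 1 * h20 + c 1 * h32

theorem topRow_coboundary_of_commute (hC : Commute C (blockTriangular₁₂₁ α a b R c β))
    (hr : ![C 3 1, C 3 2] = 0) {s : F} (hX : !![C 1 1, C 1 2; C 2 1, C 2 2] = s • 1) :
    (C 0 0 - s) • a = α • ![C 0 1, C 0 2] - ![C 0 1, C 0 2] ᵥ* R := by
  obtain ⟨h31, h32⟩ : C 3 1 = 0 ∧ C 3 2 = 0 := by simpa using hr
  obtain ⟨⟨h11, h12⟩, h21, h22⟩ := by simpa [← Matrix.ext_iff, Fin.forall_fin_two] using hX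
  have h1 := congrFun₂ hC.eq 0 1
  have h2 := congrFun₂ hC.eq 0 2
  simp only [blockTriangular₁₂₁, mul_apply, Fin.sum_univ_four, of_apply, cons_val', cons_val,
    cons_val_fin_one] at h1 h2
  ext j; fin_cases j <;> simp only [vecMul, dotProduct, Fin.sum_univ_two, Pi.smul_apply,
    Pi.sub_apply, smul_eq_mul, Fin.zero_eta, Fin.mk_one, cons_val]
  · linear_combination h1 + a 0 * h11 + a 1 * h21 + b * h31
  · linear_combination h2 + a 0 * h12 + a 1 * h22 + b * h32

theorem rightCol_coboundary_of_commute (hC : Commute C (blockTriangular₁₂₁ α a b R c β))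
    (hp : ![C 1 0, C 2 0] = 0) {s : F} (hX : !![C 1 1, C 1 2; C 2 1, C 2 2] = s • 1) :
    (s - C 3 3) • c = R *ᵥ ![C 1 3, C 2 3] - β • ![C 1 3, C 2 3] := by
  obtain ⟨h10, h20⟩ : C 1 0 = 0 ∧ C 2 0 = 0 := by simpa using hp
  obtain ⟨⟨h11, h12⟩, h21, h22⟩ := by simpa [← Matrix.ext_iff, Fin.forall_fin_two] using hX
  have h1 := congrFun₂ hC.eq 1 3
  have h2 := congrFun₂ hC.eq 2 3
  simp only [blockTriangular₁₂₁, mul_apply, Fin.sum_univ_four, of_apply, cons_val', cons_val,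
    cons_val_fin_one] at h1 h2
  ext j; fin_cases j <;> simp only [mulVec, dotProduct, Fin.sum_univ_two, Pi.smul_apply,
    Pi.sub_apply, smul_eq_mul, Fin.zero_eta, Fin.mk_one, cons_val]
  · linear_combination h1 - b * h10 - c 0 * h11 - c 1 * h12
  · linear_combination h2 - b * h20 - c 0 * h21 - c 1 * h22

theorem topRight_eq_zero_of_commute (hC : Commute C (blockTriangular₁₂₁ α a b R c β))
    (hq : ![C 0 1, C 0 2] = 0) (hv : ![C 1 3, C 2 3] = 0) (hd : C 0 0 = C 3 3)
    (hαβ : α ≠ β) : C 0 3 = 0 := by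
  obtain ⟨h01, h02⟩ : C 0 1 = 0 ∧ C 0 2 = 0 := by simpa using hq
  obtain ⟨h13, h23⟩ : C 1 3 = 0 ∧ C 2 3 = 0 := by simpa using hv
  have h := congrFun₂ hC.eq 0 3
  simp only [blockTriangular₁₂₁, mul_apply, Fin.sum_univ_four, of_apply, cons_val', cons_val,
    cons_val_fin_one] at h
  have : (β - α) * C 0 3 = 0 := by
    linear_combination h - b * hd - c 0 * h01 - c 1 * h02 + a 0 * h13 + a 1 * h23
  exact (mul_eq_zero.mp this).resolve_left (sub_ne_zero.mpr hαβ.symm)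

end blockTriangular₁₂₁

open blockTriangular₁₂₁ in
theorem exists_eq_smul_one_of_forall_commute_blockTriangular₁₂₁ {ι : Type*}
    {α β b : ι → F} {a c : ι → Fin 2 → F} {R : ι → Matrix (Fin 2) (Fin 2) F}
    (hR : Submodule.span F (Set.range R) = ⊤)
    (ha : ¬ ∃ f : Fin 2 → F, ∀ i, a i = α i • f - f ᵥ* R i)
    (hc : ¬ ∃ f : Fin 2 → F, ∀ i, c i = R i *ᵥ f - β i • f)
    (hαβ : ∃ i, α i ≠ β i) {C : Matrix (Fin 4) (Fin 4) F}
    (hC : ∀ i, Commute C (blockTriangular₁₂₁ (α i) (a i) (b i) (R i) (c i) (β i))) :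
    ∃ s : F, C = s • 1 := by
  obtain ⟨i₀, hi₀⟩ := hαβ
  have h30 := bottomLeft_eq_zero_of_commute (hC i₀) hi₀
  have hr := eq_zero_of_vecMul_eq_smul hR β fun i => bottomRow_vecMul_of_commute (hC i) h30
  have hp := eq_zero_of_mulVec_eq_smul hR α fun i => mulVec_leftCol_of_commute (hC i) h30
  obtain ⟨s, hX⟩ := exists_eq_smul_one_of_forall_commute hR fun i =>
    middleBlock_commute_of_commute (hC i) hr hp
  have h00 : C 0 0 = s := sub_eq_zero.mp <| eq_zero_of_smul_eq_vecMul_coboundary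
    (fun i => topRow_coboundary_of_commute (hC i) hr hX) ha
  have hq := eq_zero_of_vecMul_eq_smul (y := ![C 0 1, C 0 2]) hR α fun i => by
    have h := topRow_coboundary_of_commute (hC i) hr hX
    rw [h00, sub_self, zero_smul, eq_comm, sub_eq_zero] at h
    exact h.symm
  have h33 : C 3 3 = s := (sub_eq_zero.mp <| eq_zero_of_smul_eq_mulVec_coboundary
    (fun i => rightCol_coboundary_of_commute (hC i) hp hX) hc).symm
  have hv := eq_zero_of_mulVec_eq_smul (u := ![C 1 3, C 2 3]) hR β fun i => by
    have h := rightCol_coboundary_of_commute (hC i) hp hX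
    rwa [h33, sub_self, zero_smul, eq_comm, sub_eq_zero] at h
  have h03 := topRight_eq_zero_of_commute (hC i₀) hq hv (h00.trans h33.symm) hi₀
  obtain ⟨h31, h32⟩ : C 3 1 = 0 ∧ C 3 2 = 0 := by simpa using hr
  obtain ⟨h10, h20⟩ : C 1 0 = 0 ∧ C 2 0 = 0 := by simpa using hp
  obtain ⟨h01, h02⟩ : C 0 1 = 0 ∧ C 0 2 = 0 := by simpa using hq
  obtain ⟨h13, h23⟩ : C 1 3 = 0 ∧ C 2 3 = 0 := by simpa using hv
  obtain ⟨⟨h11, h12⟩, h21, h22⟩ := by simpa [← Matrix.ext_iff, Fin.forall_fin_two] using hX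
  refine ⟨s, ?_⟩
  ext i j
  fin_cases i <;> fin_cases j <;> simp [*]

end Matrix

theorem residual_rep_scalar_centralizer_general
    {F : Type*} [Field F]
    {G : Type*} [Group G]
    (k : ℕ) (χ : G →* Fˣ) (ρ : G →* GL (Fin 2) F)
    (σbar : G →* Matrix (Fin 4) (Fin 4) F)
    (a : G → Fin 2 → F) (b : G → F) (c : G → Fin 2 → F)
    (hform : ∀ g, σbar g =
      !![(χ g : F) ^ (k - 2), a g 0, a g 1, b g;
         0, (ρ g : Matrix (Fin 2) (Fin 2) F) 0 0, (ρ g : Matrix (Fin 2) (Fin 2) F) 0 1, c g 0;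
         0, (ρ g : Matrix (Fin 2) (Fin 2) F) 1 0, (ρ g : Matrix (Fin 2) (Fin 2) F) 1 1, c g 1;
         0, 0, 0, (χ g : F) ^ (k - 1)])
    -- `ρ` is absolutely irreducible (Burnside criterion):
    (hirr : Submodule.span F
      (Set.range fun g => (ρ g : Matrix (Fin 2) (Fin 2) F)) = ⊤)
    -- the class `a` is a nonsplit extension of `ρ` by `χ^(k-2)`:
    (hans : ¬ ∃ f : Fin 2 → F, ∀ g, a g =
      (χ g : F) ^ (k - 2) • f - Matrix.vecMul f (ρ g : Matrix (Fin 2) (Fin 2) F))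
    -- the class `c` is a nonsplit extension of `χ^(k-1)` by `ρ`:
    (hcns : ¬ ∃ f : Fin 2 → F, ∀ g, c g =
      Matrix.mulVec (ρ g : Matrix (Fin 2) (Fin 2) F) f - (χ g : F) ^ (k - 1) • f)
    -- the two characters on the diagonal are distinct:
    (hχ : ∃ g, (χ g : F) ^ (k - 2) ≠ (χ g : F) ^ (k - 1)) :
    ∀ C : Matrix (Fin 4) (Fin 4) F,
      (∀ g, C * σbar g = σbar g * C) → ∃ s : F, C = s • (1 : Matrix (Fin 4) (Fin 4) F) := by
  intro C hC
  exact exists_eq_smul_one_of_forall_commute_blockTriangular₁₂₁ hirr hans hcns hχ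
    fun g => hform g ▸ hC g

/-- Let `σ : G → GL₄(A)` over a local ring `A` reduce modulo the
maximal ideal to `σ̄ = [[χ^(k-2), a, b],[0, ρ, c],[0, 0, χ^(k-1)]]` over the residue
field `F`, where `ρ` is absolutely irreducible (Burnside: the matrices `ρ(g)` span
`M₂(F)`), `a` and `c` are nonsplit extension classes, and the diagonal blocks are
pairwise non-isomorphic (here `χ^(k-2) ≠ χ^(k-1)`).  Then `σ̄` has scalar centralizer. -/
theorem residual_rep_scalar_centralizer
    {A : Type*} [CommRing A] [IsLocalRing A]
    {F : Type*} [Field F] (π : A →+* F)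
    (hπsurj : Function.Surjective π)
    (hπker : ∀ x : A, π x = 0 ↔ x ∈ IsLocalRing.maximalIdeal A)
    {G : Type*} [Group G]
    (k : ℕ) (χ : G →* Fˣ) (ρ : G →* GL (Fin 2) F)
    (σ : G →* Matrix (Fin 4) (Fin 4) A)
    (σbar : G →* Matrix (Fin 4) (Fin 4) F)
    (hred : ∀ g, (σ g).map π = σbar g)
    (a : G → Fin 2 → F) (b : G → F) (c : G → Fin 2 → F)
    (hform : ∀ g, σbar g =
      !![(χ g : F) ^ (k - 2), a g 0, a g 1, b g;
         0, (ρ g : Matrix (Fin 2) (Fin 2) F) 0 0, (ρ g : Matrix (Fin 2) (Fin 2) F) 0 1, c g 0;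
         0, (ρ g : Matrix (Fin 2) (Fin 2) F) 1 0, (ρ g : Matrix (Fin 2) (Fin 2) F) 1 1, c g 1;
         0, 0, 0, (χ g : F) ^ (k - 1)])
    -- `ρ` is absolutely irreducible (Burnside criterion):
    (hirr : Submodule.span F
      (Set.range fun g => (ρ g : Matrix (Fin 2) (Fin 2) F)) = ⊤)
    -- the class `a` is a nonsplit extension of `ρ` by `χ^(k-2)`:
    (hans : ¬ ∃ f : Fin 2 → F, ∀ g, a g =
      (χ g : F) ^ (k - 2) • f - Matrix.vecMul f (ρ g : Matrix (Fin 2) (Fin 2) F))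
    -- the class `c` is a nonsplit extension of `χ^(k-1)` by `ρ`:
    (hcns : ¬ ∃ f : Fin 2 → F, ∀ g, c g =
      Matrix.mulVec (ρ g : Matrix (Fin 2) (Fin 2) F) f - (χ g : F) ^ (k - 1) • f)
    -- the two characters on the diagonal are distinct:
    (hχ : ∃ g, (χ g : F) ^ (k - 2) ≠ (χ g : F) ^ (k - 1)) :
    ∀ C : Matrix (Fin 4) (Fin 4) F,
      (∀ g, C * σbar g = σbar g * C) → ∃ s : F, C = s • (1 : Matrix (Fin 4) (Fin 4) F) :=
  residual_rep_scalar_centralizer_general k χ ρ σbar a b c hform hirr hans hcns hχ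
end
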